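/- Suppose the base of an admissible word W of an S-machine is Q_i Q_{i+1}, and consider a reduced computation starting with W ≡ q_i u q_{i+1} and ending with W' ≡ q_i' u' q_{i+1}' such that each rule of the computation multiplies the Q_i Q_{i+1}-sector by a letter on the left and by a letter on the right, different rules multiply that sector by different letters, and the left letters and the right letters are taken from disjoint alphabets. Then: (a) for every intermediate configuration W_j of the computation, ||W_j|| ≤ max(||W||, ||W'||); (b) the length of the history H of the computation does not exceed (||u|| + ||u'||)/2. -/

import Mathlib

open List FreeGroup

variable {α β : Type}

/-- Two letters cancel: `y = x⁻¹`. -/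
def Canc (x y : α × Bool) : Prop := x.1 = y.1 ∧ x.2 = !y.2

lemma canc_symm {x y : α × Bool} (h : Canc x y) : Canc y x := by
  obtain ⟨h1, h2⟩ := h
  refine ⟨h1.symm, ?_⟩
  cases hx : x.2 <;> cases hy : y.2 <;> simp_all

lemma mk_canc [DecidableEq α] {x y : α × Bool} (h : Canc x y) :
    FreeGroup.mk [x] * FreeGroup.mk [y] = 1 := by
  obtain ⟨s, bx⟩ := x
  obtain ⟨s', by'⟩ := y
  obtain ⟨h1, h2⟩ := h
  simp only at h1 h2
  subst h1 h2
  rw [FreeGroup.mul_mk]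
  have : FreeGroup.mk ([] : List (α × Bool)) = 1 := rfl
  rw [← this]
  apply FreeGroup.reduce.exact
  cases by' <;> simp [FreeGroup.reduce]

/-- `reduce` produces a word with no cancelling adjacent pair. -/
lemma chain'_reduce [DecidableEq α] (L : List (α × Bool)) :
    List.Chain' (fun x y => ¬ Canc x y) (FreeGroup.reduce L) := by
  induction L with
  | nil => exact List.IsChain.nil
  | cons x L ih =>
    rw [FreeGroup.reduce.cons]
    rcases h : FreeGroup.reduce L with _ | ⟨hd, tl⟩
    · exact List.IsChain.singleton _
    · rw [h] at ih
      by_cases hc : x.1 = hd.1 ∧ x.2 = !hd.2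
      · simp only [hc, if_true]
        exact ih.tail
      · simp only [hc, if_false]
        exact ih.cons (by simpa [Canc] using hc)

lemma reduce_eq_self [DecidableEq α] {L : List (α × Bool)}
    (h : List.Chain' (fun x y => ¬ Canc x y) L) : FreeGroup.reduce L = L := by
  induction L with
  | nil => rfl
  | cons x L ih =>
    rw [FreeGroup.reduce.cons, ih h.tail]
    rcases L with _ | ⟨hd, tl⟩
    · rfl
    · have hx : ¬ Canc x hd := List.rel_of_chain_cons h
      simp only [Canc] at hx
      simp [hx]

lemma toWord_mk_of_chain [DecidableEq α] {L : List (α × Bool)}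
    (h : List.Chain' (fun x y => ¬ Canc x y) L) : (FreeGroup.mk L).toWord = L := by
  rw [FreeGroup.toWord_mk, reduce_eq_self h]

lemma chain'_map_range'_iff {R : α → α → Prop} {f : ℕ → α} {s m : ℕ} :
    List.Chain' R ((List.range' s m).map f) ↔
      ∀ i, s ≤ i → i + 1 < s + m → R (f i) (f (i + 1)) := by
  induction m generalizing s with
  | zero => simp [List.Chain']; intro i h1 h2; omega
  | succ m ih =>
    rw [List.range'_succ]
    rcases m with _ | m
    · simp [List.Chain']; intro i h1 h2; omega
    · rw [List.range'_succ, List.map_cons, List.map_cons, List.Chain', List.isChain_cons_cons,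
        ← List.map_cons, ← List.range'_succ, ← List.Chain', ih]
      constructor
      · rintro ⟨h1, h2⟩ i hi hi2
        rcases Nat.eq_or_lt_of_le hi with rfl | hlt
        · exact h1
        · exact h2 i hlt (by omega)
      · intro h
        exact ⟨h s le_rfl (by omega), fun i hi hi2 => h i (by omega) (by omega)⟩

lemma head?_map_range' {f : ℕ → α} {s m : ℕ} (h : 0 < m) :
    ((List.range' s m).map f).head? = some (f s) := by
  rcases m with _ | m
  · omega
  · rw [List.range'_succ]; rfl

lemma getLast?_map_range' {f : ℕ → α} {s m : ℕ} (h : 0 < m) :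
    ((List.range' s m).map f).getLast? = some (f (s + m - 1)) := by
  rcases m with _ | m
  · omega
  · rw [List.range'_concat, List.map_append]
    simp

lemma map_getD_range' (l : List β) (d : β) :
    (List.range' 0 l.length).map (fun i => l.getD i d) = l := by
  induction l with
  | nil => rfl
  | cons x l ih =>
    rw [List.length_cons, List.range'_succ, List.map_cons]
    have : List.range' 1 l.length = (List.range' 0 l.length).map (· + 1) := by
      rw [List.range'_eq_map_range, List.range'_eq_map_range]
      simp [Function.comp_def, Nat.add_comm]
    rw [this, List.map_map]
    simp only [List.getD_cons_zero, List.getD_cons_succ, Function.comp_def]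
    rw [ih]

instance [DecidableEq α] (x y : α × Bool) : Decidable (Canc x y) := by
  unfold Canc; exact inferInstance

lemma mk_middle_canc [DecidableEq α] {x y : α × Bool} (h : Canc x y)
    (l₁ l₂ : List (α × Bool)) :
    FreeGroup.mk (l₁ ++ x :: y :: l₂) = FreeGroup.mk (l₁ ++ l₂) := by
  have e : l₁ ++ x :: y :: l₂ = l₁ ++ ([x] ++ ([y] ++ l₂)) := by simp
  rw [e, ← FreeGroup.mul_mk, ← FreeGroup.mul_mk (L₁ := [x]), ← FreeGroup.mul_mk (L₁ := [y]),
    ← mul_assoc (FreeGroup.mk [x]), mk_canc h, one_mul, FreeGroup.mul_mk]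

/-- surviving left letters `a_{j-1} … a_p` -/
def AW (a : ℕ → α × Bool) (j p : ℕ) : List (α × Bool) :=
  ((List.range' p (j - p)).map a).reverse

/-- surviving middle `w_p … w_{n-1-q}` -/
def MW (wv : ℕ → α × Bool) (n p q : ℕ) : List (α × Bool) :=
  (List.range' p (n - p - q)).map wv

/-- surviving right letters `b_q … b_{j-1}` -/
def BW (b : ℕ → α × Bool) (j q : ℕ) : List (α × Bool) :=
  (List.range' q (j - q)).map b

def LW (a wv b : ℕ → α × Bool) (n j p q : ℕ) : List (α × Bool) :=
  AW a j p ++ MW wv n p q ++ BW b j q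

lemma AW_nil (a : ℕ → α × Bool) (j : ℕ) : AW a j j = [] := by
  unfold AW; rw [Nat.sub_self]; rfl

lemma BW_nil (b : ℕ → α × Bool) (j : ℕ) : BW b j j = [] := by
  unfold BW; rw [Nat.sub_self]; rfl

lemma MW_nil (wv : ℕ → α × Bool) {n p q : ℕ} (h : p + q = n) : MW wv n p q = [] := by
  unfold MW; rw [show n - p - q = 0 by omega]; rfl

lemma AW_ext (a : ℕ → α × Bool) {j p : ℕ} (h : p ≤ j) :
    AW a (j + 1) p = a j :: AW a j p := by
  unfold AW
  rw [show j + 1 - p = (j - p) + 1 by omega, List.range'_concat, List.map_append,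
    List.reverse_append, show p + 1 * (j - p) = j by omega]
  rfl

lemma BW_ext (b : ℕ → α × Bool) {j q : ℕ} (h : q ≤ j) :
    BW b (j + 1) q = BW b j q ++ [b j] := by
  unfold BW
  rw [show j + 1 - q = (j - q) + 1 by omega, List.range'_concat, List.map_append,
    show q + 1 * (j - q) = j by omega]
  rfl

lemma MW_cons (wv : ℕ → α × Bool) {n p q : ℕ} (h : p + q < n) :
    MW wv n p q = wv p :: MW wv n (p + 1) q := by
  unfold MW
  rw [show n - p - q = (n - (p + 1) - q) + 1 by omega, List.range'_succ]
  rfl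

lemma MW_snoc (wv : ℕ → α × Bool) {n p q : ℕ} (h : p + q < n) :
    MW wv n p q = MW wv n p (q + 1) ++ [wv (n - 1 - q)] := by
  unfold MW
  rw [show n - p - q = (n - p - (q + 1)) + 1 by omega, List.range'_concat, List.map_append,
    show p + 1 * (n - p - (q + 1)) = n - 1 - q by omega]
  rfl

lemma length_LW (a wv b : ℕ → α × Bool) (n j p q : ℕ) :
    (LW a wv b n j p q).length = (j - p) + (n - p - q) + (j - q) := by
  unfold LW AW MW BW; simp; omega

lemma chain'_LW {t n : ℕ} {a b wv : ℕ → α × Bool}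
    (haa : ∀ i, i + 1 < t → ¬ Canc (a (i + 1)) (a i))
    (hbb : ∀ i, i + 1 < t → ¬ Canc (b (i + 1)) (b i))
    (hdisj : ∀ i k, (a i).1 ≠ (b k).1)
    (hw : List.Chain' (fun x y => ¬ Canc x y) ((List.range' 0 n).map wv))
    {j p q : ℕ} (hjt : j ≤ t) (hp : p ≤ j) (hq : q ≤ j) (hpq : p + q ≤ n)
    (h6 : p < j → p + q < n → ¬ Canc (a p) (wv p))
    (h7 : q < j → p + q < n → ¬ Canc (wv (n - 1 - q)) (b q)) :
    List.Chain' (fun x y => ¬ Canc x y) (LW a wv b n j p q) := by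
  have hwf : ∀ i, i + 1 < n → ¬ Canc (wv i) (wv (i + 1)) := by
    intro i h
    exact chain'_map_range'_iff.mp hw i (by omega) (by omega)
  unfold LW
  rw [List.append_assoc, List.Chain', List.isChain_append]
  refine ⟨?_, ?_, ?_⟩
  · unfold AW
    rw [List.isChain_reverse, ← List.Chain', chain'_map_range'_iff]
    intro i hi hi2 hc
    exact haa i (by omega) hc
  · rw [List.isChain_append]
    refine ⟨?_, ?_, ?_⟩
    · unfold MW
      rw [← List.Chain', chain'_map_range'_iff]
      intro i hi hi2
      exact hwf i (by omega)
    · unfold BW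
      rw [← List.Chain', chain'_map_range'_iff]
      intro i hi hi2 hc
      exact hbb i (by omega) (canc_symm hc)
    · intro x hx y hy
      rcases Nat.eq_zero_or_pos (n - p - q) with hm | hm
      · unfold MW at hx; rw [hm] at hx; simp at hx
      rcases Nat.eq_zero_or_pos (j - q) with hb0 | hb0
      · unfold BW at hy; rw [hb0] at hy; simp at hy
      unfold MW at hx; rw [getLast?_map_range' hm] at hx
      unfold BW at hy; rw [head?_map_range' hb0] at hy
      simp only [Option.mem_def, Option.some.injEq] at hx hy
      subst hx hy
      rw [show p + (n - p - q) - 1 = n - 1 - q by omega]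
      exact h7 (by omega) (by omega)
  · intro x hx y hy
    rcases Nat.eq_zero_or_pos (j - p) with ha0 | ha0
    · unfold AW at hx; rw [ha0] at hx; simp at hx
    unfold AW at hx
    rw [List.getLast?_reverse, head?_map_range' ha0] at hx
    simp only [Option.mem_def, Option.some.injEq] at hx
    subst hx
    rcases Nat.eq_zero_or_pos (n - p - q) with hm | hm
    · rw [MW_nil wv (by omega), List.nil_append] at hy
      rcases Nat.eq_zero_or_pos (j - q) with hb0 | hb0
      · unfold BW at hy; rw [hb0] at hy; simp at hy
      unfold BW at hy; rw [head?_map_range' hb0] at hy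
      simp only [Option.mem_def, Option.some.injEq] at hy
      subst hy
      intro hc
      exact hdisj p q hc.1
    · rw [MW_cons wv (show p + q < n by omega)] at hy
      simp only [List.cons_append, List.head?_cons, Option.mem_def, Option.some.injEq] at hy
      subst hy
      exact h6 (by omega) (by omega)

def pqSeq (f g : ℕ → ℕ → ℕ → Bool) : ℕ → ℕ × ℕ
  | 0 => (0, 0)
  | j + 1 =>
    ((if f j (pqSeq f g j).1 (pqSeq f g j).2 then (pqSeq f g j).1 + 1 else (pqSeq f g j).1),
     (if g j (pqSeq f g j).1 (pqSeq f g j).2 then (pqSeq f g j).2 + 1 else (pqSeq f g j).2))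

section pqSeqLemmas

variable {f g : ℕ → ℕ → ℕ → Bool}

lemma pqSeq_fst_step (hf : ∀ j p q, f j p q = true → p = j) (j : ℕ) :
    (pqSeq f g (j + 1)).1 = (pqSeq f g j).1 ∨
      ((pqSeq f g (j + 1)).1 = (pqSeq f g j).1 + 1 ∧ (pqSeq f g j).1 = j) := by
  by_cases h : f j (pqSeq f g j).1 (pqSeq f g j).2 = true
  · exact Or.inr ⟨by simp [pqSeq, h], hf _ _ _ h⟩
  · exact Or.inl (by simp [pqSeq, h])

lemma pqSeq_snd_step (hg : ∀ j p q, g j p q = true → q = j) (j : ℕ) :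
    (pqSeq f g (j + 1)).2 = (pqSeq f g j).2 ∨
      ((pqSeq f g (j + 1)).2 = (pqSeq f g j).2 + 1 ∧ (pqSeq f g j).2 = j) := by
  by_cases h : g j (pqSeq f g j).1 (pqSeq f g j).2 = true
  · exact Or.inr ⟨by simp [pqSeq, h], hg _ _ _ h⟩
  · exact Or.inl (by simp [pqSeq, h])

lemma pqSeq_fst_le (hf : ∀ j p q, f j p q = true → p = j) (j : ℕ) :
    (pqSeq f g j).1 ≤ j := by
  induction j with
  | zero => exact le_rfl
  | succ j ih => rcases pqSeq_fst_step (g := g) hf j with h | ⟨h, h2⟩ <;> omega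

lemma pqSeq_snd_le (hg : ∀ j p q, g j p q = true → q = j) (j : ℕ) :
    (pqSeq f g j).2 ≤ j := by
  induction j with
  | zero => exact le_rfl
  | succ j ih => rcases pqSeq_snd_step (f := f) hg j with h | ⟨h, h2⟩ <;> omega

lemma pqSeq_fst_mono_diff (hf : ∀ j p q, f j p q = true → p = j) {j k : ℕ} (hjk : j ≤ k) :
    (pqSeq f g j).1 ≤ (pqSeq f g k).1 ∧ (pqSeq f g k).1 - (pqSeq f g j).1 ≤ k - j := by
  induction k, hjk using Nat.le_induction with
  | base => omega
  | succ k hk ih =>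
    rcases pqSeq_fst_step (g := g) hf k with h2 | ⟨h2, h3⟩ <;> omega

lemma pqSeq_snd_mono_diff (hg : ∀ j p q, g j p q = true → q = j) {j k : ℕ} (hjk : j ≤ k) :
    (pqSeq f g j).2 ≤ (pqSeq f g k).2 ∧ (pqSeq f g k).2 - (pqSeq f g j).2 ≤ k - j := by
  induction k, hjk using Nat.le_induction with
  | base => omega
  | succ k hk ih =>
    rcases pqSeq_snd_step (f := f) hg k with h2 | ⟨h2, h3⟩ <;> omega

lemma pqSeq_fst_stab (hf : ∀ j p q, f j p q = true → p = j) {j k : ℕ} (hjk : j ≤ k)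
    (h : (pqSeq f g j).1 < j) : (pqSeq f g k).1 = (pqSeq f g j).1 := by
  induction k, hjk using Nat.le_induction with
  | base => rfl
  | succ k hk ih =>
    rcases pqSeq_fst_step (g := g) hf k with h2 | ⟨h2, h3⟩ <;> omega

lemma pqSeq_snd_stab (hg : ∀ j p q, g j p q = true → q = j) {j k : ℕ} (hjk : j ≤ k)
    (h : (pqSeq f g j).2 < j) : (pqSeq f g k).2 = (pqSeq f g j).2 := by
  induction k, hjk using Nat.le_induction with
  | base => rfl
  | succ k hk ih =>
    rcases pqSeq_snd_step (f := f) hg k with h2 | ⟨h2, h3⟩ <;> omega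

end pqSeqLemmas

theorem aux_main [DecidableEq α] (t n : ℕ) (a b wv : ℕ → α × Bool)
    (v : ℕ → FreeGroup α)
    (haa : ∀ i, i + 1 < t → ¬ Canc (a (i + 1)) (a i))
    (hbb : ∀ i, i + 1 < t → ¬ Canc (b (i + 1)) (b i))
    (hdisj : ∀ i k, (a i).1 ≠ (b k).1)
    (hw : List.Chain' (fun x y => ¬ Canc x y) ((List.range' 0 n).map wv))
    (hv0 : v 0 = FreeGroup.mk ((List.range' 0 n).map wv))
    (hstep : ∀ j, j < t → v (j + 1) = FreeGroup.mk [a j] * v j * FreeGroup.mk [b j]) :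
    (∀ j, j ≤ t → (v j).toWord.length ≤ max (v 0).toWord.length (v t).toWord.length) ∧
      2 * t ≤ (v 0).toWord.length + (v t).toWord.length := by
  classical
  set f : ℕ → ℕ → ℕ → Bool :=
    fun j p q => decide (p = j ∧ p + q < n ∧ Canc (a j) (wv p)) with hf_def
  set g : ℕ → ℕ → ℕ → Bool :=
    fun j p q => decide (q = j ∧ p + q < n ∧ Canc (wv (n - 1 - q)) (b j)) with hg_def
  have hf : ∀ j p q, f j p q = true → p = j := by
    intro j p q h
    rw [hf_def] at h
    exact (of_decide_eq_true h).1
  have hg : ∀ j p q, g j p q = true → q = j := by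
    intro j p q h
    rw [hg_def] at h
    exact (of_decide_eq_true h).1
  have main : ∀ j, j ≤ t →
      (pqSeq f g j).1 + (pqSeq f g j).2 ≤ n ∧
      ((pqSeq f g j).1 < j → (pqSeq f g j).1 + (pqSeq f g j).2 < n →
        ¬ Canc (a (pqSeq f g j).1) (wv (pqSeq f g j).1)) ∧
      ((pqSeq f g j).2 < j → (pqSeq f g j).1 + (pqSeq f g j).2 < n →
        ¬ Canc (wv (n - 1 - (pqSeq f g j).2)) (b (pqSeq f g j).2)) ∧
      v j = FreeGroup.mk (LW a wv b n j (pqSeq f g j).1 (pqSeq f g j).2) := by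
    intro j
    induction j with
    | zero =>
      intro _
      refine ⟨by simp [pqSeq], by simp [pqSeq], by simp [pqSeq], ?_⟩
      show v 0 = FreeGroup.mk (LW a wv b n 0 0 0)
      rw [hv0]
      unfold LW
      rw [AW_nil, BW_nil]
      unfold MW
      simp
    | succ j ih =>
      intro hj1
      have hjt : j < t := hj1
      obtain ⟨hpqn, h6, h7, hv⟩ := ih (by omega)
      have hple := pqSeq_fst_le (g := g) hf j
      have hqle := pqSeq_snd_le (f := f) hg j
      rcases hpq : pqSeq f g j with ⟨p, q⟩
      rw [hpq] at hpqn h6 h7 hv hple hqle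
      simp only at hpqn h6 h7 hv hple hqle
      have hstep_eq : pqSeq f g (j + 1) =
          (if f j p q then p + 1 else p, if g j p q then q + 1 else q) := by
        simp only [pqSeq, hpq]
      have hv1 : v (j + 1) =
          FreeGroup.mk [a j] * FreeGroup.mk (LW a wv b n j p q) * FreeGroup.mk [b j] := by
        rw [hstep j hjt, hv]
      by_cases hLC : p = j ∧ p + q < n ∧ Canc (a j) (wv p)
      · have hfj : f j p q = true := by rw [hf_def]; exact decide_eq_true hLC
        by_cases hRC : q = j ∧ p + q < n ∧ Canc (wv (n - 1 - q)) (b j)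
        · -- both sides cancel
          have hgj : g j p q = true := by rw [hg_def]; exact decide_eq_true hRC
          obtain ⟨hpj, hpqlt, hcancL⟩ := hLC
          obtain ⟨hqj, -, hcancR⟩ := hRC
          subst hpj
          subst hqj
          have hnn : q + q + 2 ≤ n := by
            rcases Nat.lt_or_ge (q + q + 1) n with h | h
            · omega
            · exfalso
              have hpe : n - 1 - q = q := by omega
              have h1 : (a q).1 = (wv q).1 := hcancL.1
              have h2 : (wv (n - 1 - q)).1 = (b q).1 := hcancR.1
              rw [hpe] at h2
              exact hdisj q q (h1.trans h2)
          have hnew : pqSeq f g (q + 1) = (q + 1, q + 1) := by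
            rw [hstep_eq, hfj, hgj]; rfl
          rw [hnew]
          refine ⟨by omega, by omega, by omega, ?_⟩
          have e1 : FreeGroup.mk (LW a wv b n q q q) =
              FreeGroup.mk [wv q] * FreeGroup.mk (MW wv n (q + 1) (q + 1)) *
                FreeGroup.mk [wv (n - 1 - q)] := by
            unfold LW
            rw [AW_nil, BW_nil, MW_cons wv hpqlt, MW_snoc wv (show q + 1 + q < n by omega),
              FreeGroup.mul_mk, FreeGroup.mul_mk]
            apply congrArg
            simp
          calc v (q + 1) = FreeGroup.mk [a q] *
              (FreeGroup.mk [wv q] * FreeGroup.mk (MW wv n (q + 1) (q + 1)) *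
                FreeGroup.mk [wv (n - 1 - q)]) * FreeGroup.mk [b q] := by rw [hv1, e1]
            _ = (FreeGroup.mk [a q] * FreeGroup.mk [wv q]) *
                FreeGroup.mk (MW wv n (q + 1) (q + 1)) *
                  (FreeGroup.mk [wv (n - 1 - q)] * FreeGroup.mk [b q]) := by
                simp only [mul_assoc]
            _ = 1 * FreeGroup.mk (MW wv n (q + 1) (q + 1)) * 1 := by
                rw [mk_canc hcancL, mk_canc hcancR]
            _ = FreeGroup.mk (MW wv n (q + 1) (q + 1)) := by rw [one_mul, mul_one]
            _ = FreeGroup.mk (LW a wv b n (q + 1) (q + 1) (q + 1)) := by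
                unfold LW
                rw [AW_nil, BW_nil]
                apply congrArg
                simp
        · -- only left cancels
          have hgj : g j p q = false := by rw [hg_def]; exact decide_eq_false hRC
          obtain ⟨hpj, hpqlt, hcancL⟩ := hLC
          subst hpj
          have hnew : pqSeq f g (p + 1) = (p + 1, q) := by
            rw [hstep_eq, hfj, hgj]; rfl
          rw [hnew]
          refine ⟨by omega, by omega, ?_, ?_⟩
          · intro h1 h2
            rcases Nat.lt_or_ge q p with hqp | hqp
            · exact h7 hqp (by omega)
            · have hqj : q = p := by omega
              subst hqj
              intro hc
              exact hRC ⟨rfl, by omega, hc⟩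
          · have e1 : FreeGroup.mk (LW a wv b n p p q) =
                FreeGroup.mk [wv p] *
                  FreeGroup.mk (MW wv n (p + 1) q ++ BW b p q) := by
              unfold LW
              rw [AW_nil, MW_cons wv hpqlt, FreeGroup.mul_mk]
              apply congrArg
              simp
            calc v (p + 1) = FreeGroup.mk [a p] *
                (FreeGroup.mk [wv p] * FreeGroup.mk (MW wv n (p + 1) q ++ BW b p q)) *
                  FreeGroup.mk [b p] := by rw [hv1, e1]
              _ = (FreeGroup.mk [a p] * FreeGroup.mk [wv p]) *
                  (FreeGroup.mk (MW wv n (p + 1) q ++ BW b p q) * FreeGroup.mk [b p]) := by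
                  simp only [mul_assoc]
              _ = FreeGroup.mk ((MW wv n (p + 1) q ++ BW b p q) ++ [b p]) := by
                  rw [mk_canc hcancL, one_mul, FreeGroup.mul_mk]
              _ = FreeGroup.mk (LW a wv b n (p + 1) (p + 1) q) := by
                  unfold LW
                  rw [AW_nil, BW_ext b hqle]
                  apply congrArg
                  simp
      · have hfj : f j p q = false := by rw [hf_def]; exact decide_eq_false hLC
        by_cases hRC : q = j ∧ p + q < n ∧ Canc (wv (n - 1 - q)) (b j)
        · -- only right cancels
          have hgj : g j p q = true := by rw [hg_def]; exact decide_eq_true hRC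
          obtain ⟨hqj, hpqlt, hcancR⟩ := hRC
          subst hqj
          have hnew : pqSeq f g (q + 1) = (p, q + 1) := by
            rw [hstep_eq, hfj, hgj]; rfl
          rw [hnew]
          refine ⟨by omega, ?_, by omega, ?_⟩
          · intro h1 h2
            rcases Nat.lt_or_ge p q with hpq' | hpq'
            · exact h6 hpq' (by omega)
            · have hpj : p = q := by omega
              subst hpj
              intro hc
              exact hLC ⟨rfl, by omega, hc⟩
          · have e1 : FreeGroup.mk (LW a wv b n q p q) =
                FreeGroup.mk (AW a q p ++ MW wv n p (q + 1)) *
                  FreeGroup.mk [wv (n - 1 - q)] := by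
              unfold LW
              rw [BW_nil, MW_snoc wv hpqlt, FreeGroup.mul_mk]
              apply congrArg
              simp
            calc v (q + 1) = FreeGroup.mk [a q] *
                (FreeGroup.mk (AW a q p ++ MW wv n p (q + 1)) *
                  FreeGroup.mk [wv (n - 1 - q)]) * FreeGroup.mk [b q] := by rw [hv1, e1]
              _ = (FreeGroup.mk [a q] * FreeGroup.mk (AW a q p ++ MW wv n p (q + 1))) *
                  (FreeGroup.mk [wv (n - 1 - q)] * FreeGroup.mk [b q]) := by
                  simp only [mul_assoc]
              _ = FreeGroup.mk ([a q] ++ (AW a q p ++ MW wv n p (q + 1))) := by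
                  rw [mk_canc hcancR, mul_one, FreeGroup.mul_mk]
              _ = FreeGroup.mk (LW a wv b n (q + 1) p (q + 1)) := by
                  unfold LW
                  rw [BW_nil, AW_ext a hple]
                  apply congrArg
                  simp
        · -- no cancellation
          have hgj : g j p q = false := by rw [hg_def]; exact decide_eq_false hRC
          have hnew : pqSeq f g (j + 1) = (p, q) := by
            rw [hstep_eq, hfj, hgj]; rfl
          rw [hnew]
          refine ⟨by omega, ?_, ?_, ?_⟩
          · intro h1 h2
            rcases Nat.lt_or_ge p j with hpj | hpj
            · exact h6 hpj h2
            · have hpj' : p = j := by omega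
              intro hc
              exact hLC ⟨hpj', h2, by rw [← hpj']; exact canc_symm (canc_symm hc)⟩
          · intro h1 h2
            rcases Nat.lt_or_ge q j with hqj | hqj
            · exact h7 hqj h2
            · have hqj' : q = j := by omega
              intro hc
              exact hRC ⟨hqj', h2, by rw [← hqj']; exact hc⟩
          · calc v (j + 1) = FreeGroup.mk [a j] * FreeGroup.mk (LW a wv b n j p q) *
                FreeGroup.mk [b j] := hv1
              _ = FreeGroup.mk ([a j] ++ LW a wv b n j p q ++ [b j]) := by
                  rw [FreeGroup.mul_mk, FreeGroup.mul_mk]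
              _ = FreeGroup.mk (LW a wv b n (j + 1) p q) := by
                  unfold LW
                  rw [AW_ext a hple, BW_ext b hqle]
                  apply congrArg
                  simp
  have hlen : ∀ j, j ≤ t → (v j).toWord.length =
      (j - (pqSeq f g j).1) + (n - (pqSeq f g j).1 - (pqSeq f g j).2) +
        (j - (pqSeq f g j).2) := by
    intro j hj
    obtain ⟨hpqn, h6, h7, hv⟩ := main j hj
    rw [hv, toWord_mk_of_chain
      (chain'_LW haa hbb hdisj hw hj (pqSeq_fst_le (g := g) hf j)
        (pqSeq_snd_le (f := f) hg j) hpqn h6 h7), length_LW]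
  have hlen0 : (v 0).toWord.length = n := by
    rw [hlen 0 (Nat.zero_le t)]
    simp [pqSeq]
  have hlent := hlen t le_rfl
  have hptle := pqSeq_fst_le (g := g) hf t
  have hqtle := pqSeq_snd_le (f := f) hg t
  obtain ⟨hpqnt, -, -, -⟩ := main t le_rfl
  constructor
  · intro j hj
    have hlenj := hlen j hj
    have hpjle := pqSeq_fst_le (g := g) hf j
    have hqjle := pqSeq_snd_le (f := f) hg j
    obtain ⟨hpqnj, -, -, -⟩ := main j hj
    rcases Nat.lt_or_ge (pqSeq f g j).1 j with hpj | hpj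
    · have hstabP := pqSeq_fst_stab (g := g) hf hj hpj
      have hmonoQ := pqSeq_snd_mono_diff (f := f) hg hj
      have : (v j).toWord.length ≤ (v t).toWord.length := by omega
      exact le_max_of_le_right this
    · have hpj' : (pqSeq f g j).1 = j := by omega
      rcases Nat.lt_or_ge (pqSeq f g j).2 j with hqj | hqj
      · have hstabQ := pqSeq_snd_stab (f := f) hg hj hqj
        have hmonoP := pqSeq_fst_mono_diff (g := g) hf hj
        have : (v j).toWord.length ≤ (v t).toWord.length := by omega
        exact le_max_of_le_right this
      · have hqj' : (pqSeq f g j).2 = j := by omega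
        have : (v j).toWord.length ≤ (v 0).toWord.length := by omega
        exact le_max_of_le_left this
  · omega

/-- Lemma `gen1`.  A computation with base `Q_i Q_{i+1}` is modelled by the evolution of
the tape word of its single sector inside the free group on `YL ⊕ YR`.  Each rule
multiplies the sector by one letter on the left and one letter on the right, the left and
right letters being taken from the disjoint alphabets `YL` and `YR`; different rules
multiply the sector by different letters, rules come in mutually inverse pairs, and the
computation is reduced.  Here `‖W‖ = ‖u‖ + 2` counts the two state letters of an
admissible word `q_i u q_{i+1}`. -/
theorem sMachine_one_sector_two_letters
    {YL YR R : Type} [DecidableEq YL] [DecidableEq YR]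
    (ℓL : R → YL × Bool) (ℓR : R → YR × Bool)
    (hinjL : Function.Injective ℓL) (hinjR : Function.Injective ℓR)
    (inv : R → R)
    (hinvL : ∀ r, ℓL (inv r) = ((ℓL r).1, !(ℓL r).2))
    (hinvR : ∀ r, ℓR (inv r) = ((ℓR r).1, !(ℓR r).2))
    (t : ℕ) (u : Fin (t + 1) → FreeGroup (YL ⊕ YR)) (hist : Fin t → R)
    (hred : ∀ (i : ℕ) (hi : i + 1 < t),
      hist ⟨i + 1, hi⟩ ≠ inv (hist ⟨i, by omega⟩))
    (hstep : ∀ i : Fin t, u i.succ =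
      FreeGroup.mk [(Sum.inl (ℓL (hist i)).1, (ℓL (hist i)).2)] * u i.castSucc *
        FreeGroup.mk [(Sum.inr (ℓR (hist i)).1, (ℓR (hist i)).2)]) :
    -- (a) `‖W_j‖ ≤ max (‖W_0‖, ‖W_t‖)` for every intermediate configuration
    (∀ j : Fin (t + 1),
      (u j).toWord.length + 2 ≤
        max ((u 0).toWord.length + 2) ((u (Fin.last t)).toWord.length + 2)) ∧
    -- (b) `‖H‖ ≤ (‖u‖ + ‖u'‖)/2`
    2 * t ≤ (u 0).toWord.length + (u (Fin.last t)).toWord.length := by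
  classical
  rcases Nat.eq_zero_or_pos t with ht0 | htpos
  · subst ht0
    constructor
    · intro j
      have hj : j = 0 := Fin.ext (by omega)
      rw [hj]
      exact le_max_left _ _
    · simp
  · obtain ⟨a, ha, ha'⟩ : ∃ a : ℕ → (YL ⊕ YR) × Bool,
        (∀ i (h : i < t), a i = (Sum.inl (ℓL (hist ⟨i, h⟩)).1, (ℓL (hist ⟨i, h⟩)).2)) ∧
        (∀ i, ∃ y c, a i = (Sum.inl y, c)) := by
      refine ⟨fun i => (Sum.inl (ℓL (hist ⟨min i (t - 1), by omega⟩)).1,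
        (ℓL (hist ⟨min i (t - 1), by omega⟩)).2), fun i h => ?_, fun i => ⟨_, _, rfl⟩⟩
      have he : (⟨min i (t - 1), by omega⟩ : Fin t) = ⟨i, h⟩ :=
        Fin.ext (Nat.min_eq_left (by omega))
      exact congrArg (fun x : Fin t => ((Sum.inl (ℓL (hist x)).1 : YL ⊕ YR), (ℓL (hist x)).2)) he
    obtain ⟨b, hb, hb'⟩ : ∃ b : ℕ → (YL ⊕ YR) × Bool,
        (∀ i (h : i < t), b i = (Sum.inr (ℓR (hist ⟨i, h⟩)).1, (ℓR (hist ⟨i, h⟩)).2)) ∧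
        (∀ i, ∃ y c, b i = (Sum.inr y, c)) := by
      refine ⟨fun i => (Sum.inr (ℓR (hist ⟨min i (t - 1), by omega⟩)).1,
        (ℓR (hist ⟨min i (t - 1), by omega⟩)).2), fun i h => ?_, fun i => ⟨_, _, rfl⟩⟩
      have he : (⟨min i (t - 1), by omega⟩ : Fin t) = ⟨i, h⟩ :=
        Fin.ext (Nat.min_eq_left (by omega))
      exact congrArg (fun x : Fin t => ((Sum.inr (ℓR (hist x)).1 : YL ⊕ YR), (ℓR (hist x)).2)) he
    obtain ⟨v, hv⟩ : ∃ v : ℕ → FreeGroup (YL ⊕ YR),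
        ∀ j (h : j ≤ t), v j = u ⟨j, by omega⟩ := by
      refine ⟨fun j => u ⟨min j t, by omega⟩, fun j h => ?_⟩
      have he : (⟨min j t, by omega⟩ : Fin (t + 1)) = ⟨j, by omega⟩ :=
        Fin.ext (Nat.min_eq_left h)
      exact congrArg u he
    set d : (YL ⊕ YR) × Bool := (Sum.inl (ℓL (hist ⟨0, htpos⟩)).1, true) with hd_def
    have haa : ∀ i, i + 1 < t → ¬ Canc (a (i + 1)) (a i) := by
      intro i h hc
      rw [ha (i + 1) h, ha i (by omega)] at hc
      obtain ⟨h1, h2⟩ := hc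
      simp only [Sum.inl.injEq] at h1 h2
      have : ℓL (hist ⟨i + 1, h⟩) = ℓL (inv (hist ⟨i, by omega⟩)) := by
        rw [hinvL]
        exact Prod.ext h1 h2
      exact hred i h (hinjL this)
    have hbb : ∀ i, i + 1 < t → ¬ Canc (b (i + 1)) (b i) := by
      intro i h hc
      rw [hb (i + 1) h, hb i (by omega)] at hc
      obtain ⟨h1, h2⟩ := hc
      simp only [Sum.inr.injEq] at h1 h2
      have : ℓR (hist ⟨i + 1, h⟩) = ℓR (inv (hist ⟨i, by omega⟩)) := by
        rw [hinvR]
        exact Prod.ext h1 h2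
      exact hred i h (hinjR this)
    have hdisj : ∀ i k, (a i).1 ≠ (b k).1 := by
      intro i k
      obtain ⟨y, c, e⟩ := ha' i
      obtain ⟨z, c', e'⟩ := hb' k
      rw [e, e']
      simp
    have hwred : List.Chain' (fun x y => ¬ Canc x y)
        ((List.range' 0 (u 0).toWord.length).map (fun i => (u 0).toWord.getD i d)) := by
      rw [map_getD_range' (u 0).toWord d]
      have h := chain'_reduce (α := YL ⊕ YR) (u 0).toWord
      rwa [FreeGroup.reduce_toWord] at h
    have hv0 : v 0 = FreeGroup.mk ((List.range' 0 (u 0).toWord.length).map (fun i => (u 0).toWord.getD i d)) := by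
      rw [map_getD_range', hv 0 (Nat.zero_le t)]
      have he : (⟨0, by omega⟩ : Fin (t + 1)) = 0 := rfl
      rw [he, FreeGroup.mk_toWord]
    have hstep' : ∀ j, j < t → v (j + 1) =
        FreeGroup.mk [a j] * v j * FreeGroup.mk [b j] := by
      intro j hj
      rw [hv (j + 1) (by omega), hv j (by omega), ha j hj, hb j hj]
      exact hstep ⟨j, hj⟩
    obtain ⟨hA, hB⟩ := aux_main t (u 0).toWord.length a b (fun i => (u 0).toWord.getD i d) v
      haa hbb hdisj hwred hv0 hstep'
    have he0 : v 0 = u 0 := by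
      rw [hv 0 (Nat.zero_le t)]; rfl
    have helast : v t = u (Fin.last t) := by
      rw [hv t le_rfl]; rfl
    rw [he0, helast] at hA hB
    constructor
    · intro j
      have hj : (j : ℕ) ≤ t := by omega
      have h := hA j.val hj
      rw [hv j.val hj] at h
      have he : (⟨(j : ℕ), by omega⟩ : Fin (t + 1)) = j := Fin.ext rfl
      rw [he] at h
      have hmax : max ((u 0).toWord.length + 2) ((u (Fin.last t)).toWord.length + 2) =
          max ((u 0).toWord.length) ((u (Fin.last t)).toWord.length) + 2 := by
        rcases le_total ((u 0).toWord.length) ((u (Fin.last t)).toWord.length) with hle | hle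
        · rw [max_eq_right hle, max_eq_right (by omega)]
        · rw [max_eq_left hle, max_eq_left (by omega)]
      omega
    · exact hB
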